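/- For any monoid M and any k ≥ 0, the fiber relation ≡_{first_k} (p ≡_{first_k} p' iff first_k(p) = first_k(p')) is the smallest clone congruence of P(M) relating, for every choice of α_1, …, α_k, α_{k+1} ∈ M, the two words 1^{α_1} 2^e 1^{α_2} 3^e ⋯ 1^{α_k} (k+1)^e 1^{α_{k+1}} and 1^{α_1} 2^e 1^{α_2} 3^e ⋯ 1^{α_k} (k+1)^e of P(M)(k+1): ≡_{first_k} is a clone congruence relating each such pair, and every clone congruence of P(M) relating all such pairs contains ≡_{first_k}. -/

import Mathlib

/-!
Whether a letter is a left `k`-witness depends on the preceding letters only through their value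
counts truncated at `k`, so the fiber relation of `firstK k` is a congruence for concatenation.
A superposition is a concatenation of pigmented copies of the `q i`, and a letter of `p` beyond the
`k`-th one of its value contributes a block all of whose values already occur `k` times before it,
so that block is discarded. Conversely, if `u` has at least `k` letters of value `i`, substituting
`i` for `1` and the gaps of `u` between those letters for `2, …, k + 1` in the generating pair shows
that a clone congruence may delete any letter of value `i` appended to `u`; deleting every letter
that is not a left `k`-witness turns `p` into `firstK k p`.
-/

/-- An `M`-pigmented word of arity `n`: a list of letters `(i, α)` whose value is
`i ∈ Fin n` (representing the value `i + 1 ∈ {1, …, n}`) and whose pigment is `α ∈ M`. -/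
abbrev PW (M : Type*) (n : ℕ) : Type _ := List (Fin n × M)

/-- The superposition `p⟨q 0, …, q (n-1)⟩` of pigmented words. -/
def pwSuper {M : Type*} [Monoid M] {n m : ℕ} (p : PW M n) (q : Fin n → PW M m) : PW M m :=
  p.flatMap (fun l => (q l.1).map (fun x => (x.1, l.2 * x.2)))

/-- A clone congruence of `P(M)`: an arity-indexed family of relations compatible
with the superposition maps. -/
def IsCloneCong {M : Type*} [Monoid M] (r : ∀ n, PW M n → PW M n → Prop) : Prop :=
  ∀ ⦃n m : ℕ⦄ ⦃p p' : PW M n⦄ ⦃q q' : Fin n → PW M m⦄,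
    r n p p' → (∀ i, r m (q i) (q' i)) → r m (pwSuper p q) (pwSuper p' q')

/-- `firstKAux k pre p` keeps those letters of `p` whose position is a left
`k`-witness, given that the prefix `pre` has already been read. -/
def firstKAux {M : Type*} {n : ℕ} (k : ℕ) : PW M n → PW M n → PW M n
  | _, [] => []
  | pre, l :: t =>
    if pre.countP (fun x => decide (x.1 = l.1)) < k
    then l :: firstKAux k (pre ++ [l]) t
    else firstKAux k (pre ++ [l]) t

/-- `firstK k p` keeps, for each value, the first `k` occurrences of that value in `p`
(the letters at left `k`-witness positions). -/
def firstK {M : Type*} {n : ℕ} (k : ℕ) (p : PW M n) : PW M n := firstKAux k [] p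

/-- The word `1^{α 0} 2^e 1^{α 1} 3^e ⋯ 1^{α (k-1)} (k+1)^e` of arity `k + 1`. -/
def chainW (M : Type*) [Monoid M] (k : ℕ) (α : Fin (k + 1) → M) : PW M (k + 1) :=
  (List.finRange k).flatMap
    (fun j => [((0 : Fin (k + 1)), α j.castSucc), (j.succ, (1 : M))])

/-- The word `1^{α 0} 2^e 1^{α 1} 3^e ⋯ 1^{α (k-1)} (k+1)^e 1^{α k}` of arity `k + 1`. -/
def chainW' (M : Type*) [Monoid M] (k : ℕ) (α : Fin (k + 1) → M) : PW M (k + 1) :=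
  chainW M k α ++ [((0 : Fin (k + 1)), α (Fin.last k))]

section Count

variable {M M' : Type*} {n : ℕ}

def valueCount (i : Fin n) (p : PW M n) : ℕ := p.countP fun x => decide (x.1 = i)

@[simp]
lemma valueCount_nil (i : Fin n) : valueCount i ([] : PW M n) = 0 := rfl

@[simp]
lemma valueCount_append (i : Fin n) (a b : PW M n) :
    valueCount i (a ++ b) = valueCount i a + valueCount i b :=
  List.countP_append

@[simp]
lemma valueCount_singleton (i : Fin n) (l : Fin n × M) :
    valueCount i [l] = if l.1 = i then 1 else 0 := by
  simp [valueCount, List.countP_cons]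

lemma valueCount_cons (i : Fin n) (l : Fin n × M) (t : PW M n) :
    valueCount i (l :: t) = (if l.1 = i then 1 else 0) + valueCount i t := by
  rw [← List.singleton_append, valueCount_append, valueCount_singleton]

lemma valueCount_map {f : Fin n × M → Fin n × M'} (hf : ∀ x, (f x).1 = x.1) (i : Fin n)
    (p : PW M n) : valueCount i (p.map f) = valueCount i p := by
  simp only [valueCount, List.countP_map, Function.comp_def, hf]

lemma valueCount_pos_of_mem {l : Fin n × M} {p : PW M n} (h : l ∈ p) : 0 < valueCount l.1 p :=
  List.countP_pos_iff.2 ⟨l, h, by simp⟩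

lemma exists_eq_append_cons_of_valueCount_pos {i : Fin n} {p : PW M n}
    (h : 0 < valueCount i p) : ∃ s b t, p = s ++ (i, b) :: t ∧ valueCount i s = 0 := by
  obtain ⟨l, hl, hli⟩ := List.countP_pos_iff.1 h
  obtain ⟨x, hx⟩ := Option.isSome_iff_exists.1
    ((List.find?_isSome (p := fun x => decide (x.1 = i))).2 ⟨l, hl, hli⟩)
  obtain ⟨hxi, s, t, rfl, hs⟩ := List.find?_eq_some_iff_append.1 hx
  obtain rfl : x.1 = i := of_decide_eq_true hxi
  exact ⟨s, x.2, t, rfl, List.countP_eq_zero.2 fun a ha => by simpa using hs a ha⟩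

lemma exists_eq_append_flatMap_of_le_valueCount {k : ℕ} {i : Fin n} {u : PW M n}
    (h : k ≤ valueCount i u) : ∃ (s₀ : PW M n) (β : Fin k → M) (s : Fin k → PW M n),
      u = s₀ ++ (List.finRange k).flatMap fun j => (i, β j) :: s j := by
  induction k generalizing u with
  | zero => exact ⟨u, Fin.elim0, Fin.elim0, by simp⟩
  | succ k ih =>
    obtain ⟨a, b, t, rfl, ha⟩ :=
      exists_eq_append_cons_of_valueCount_pos (by omega : 0 < valueCount i u)
    obtain ⟨s₀, β, s, rfl⟩ := ih (u := t) (by simp [valueCount_cons] at h; omega)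
    exact ⟨a, Fin.cons b β, Fin.cons s₀ s, by simp [List.finRange_succ, List.flatMap_map]⟩

end Count

section FirstK

variable {M M' : Type*} {n : ℕ} (k : ℕ)

lemma firstKAux_cons (pre : PW M n) (l : Fin n × M) (t : PW M n) :
    firstKAux k pre (l :: t) =
      if valueCount l.1 pre < k then l :: firstKAux k (pre ++ [l]) t
      else firstKAux k (pre ++ [l]) t :=
  rfl

lemma firstKAux_append (pre a b : PW M n) :
    firstKAux k pre (a ++ b) = firstKAux k pre a ++ firstKAux k (pre ++ a) b := by
  induction a generalizing pre with
  | nil => simp [firstKAux]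
  | cons l t ih =>
    simp only [List.cons_append, firstKAux_cons, ih, List.append_assoc]
    split_ifs <;> rfl

lemma firstKAux_singleton (pre : PW M n) (l : Fin n × M) :
    firstKAux k pre [l] = if valueCount l.1 pre < k then [l] else [] := by
  rw [firstKAux_cons]
  split_ifs <;> rfl

lemma firstK_append (a b : PW M n) : firstK k (a ++ b) = firstK k a ++ firstKAux k a b :=
  firstKAux_append k [] a b

lemma firstK_append_singleton (a : PW M n) (l : Fin n × M) :
    firstK k (a ++ [l]) = firstK k a ++ if valueCount l.1 a < k then [l] else [] := by
  rw [firstK_append, firstKAux_singleton]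

lemma firstKAux_congr {pre pre' : PW M n}
    (h : ∀ i, min k (valueCount i pre) = min k (valueCount i pre')) (p : PW M n) :
    firstKAux k pre p = firstKAux k pre' p := by
  induction p generalizing pre pre' with
  | nil => rfl
  | cons l t ih =>
    have hl : valueCount l.1 pre < k ↔ valueCount l.1 pre' < k := by have := h l.1; omega
    have ht : firstKAux k (pre ++ [l]) t = firstKAux k (pre' ++ [l]) t := by
      refine ih fun i => ?_
      have := h i
      simp only [valueCount_append]
      omega
    simp only [firstKAux_cons, hl, ht]

lemma firstKAux_eq_nil {pre b : PW M n} (h : ∀ l ∈ b, k ≤ valueCount l.1 pre) :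
    firstKAux k pre b = [] := by
  induction b generalizing pre with
  | nil => rfl
  | cons l t ih =>
    simp only [List.mem_cons, forall_eq_or_imp] at h
    have ht : firstKAux k (pre ++ [l]) t = [] :=
      ih fun x hx => (h.2 x hx).trans (by simp)
    simp [firstKAux_cons, h.1, ht]

lemma valueCount_firstK (i : Fin n) (p : PW M n) :
    valueCount i (firstK k p) = min k (valueCount i p) := by
  induction p using List.reverseRecOn with
  | nil => simp [firstK, firstKAux]
  | append_singleton u l ih =>
    rw [firstK_append_singleton, valueCount_append, ih]
    by_cases hl : l.1 = i
    · subst hl; split_ifs <;> simp <;> omega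
    · split_ifs <;> simp [hl]

lemma firstKAux_firstK (pre p : PW M n) : firstKAux k pre (firstK k p) = firstKAux k pre p := by
  induction p using List.reverseRecOn with
  | nil => rfl
  | append_singleton u l ih =>
    rw [firstK_append_singleton, firstKAux_append, ih, firstKAux_append]
    congr 1
    by_cases hl : valueCount l.1 u < k
    · have := valueCount_firstK k l.1 u
      simp only [if_pos hl, firstKAux_singleton, valueCount_append]
      congr 2
      omega
    · rw [if_neg hl, firstKAux_eq_nil k (by simp), firstKAux_eq_nil k (by simp; omega)]

lemma firstK_firstK (p : PW M n) : firstK k (firstK k p) = firstK k p :=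
  firstKAux_firstK k [] p

lemma firstK_append_firstK (a b : PW M n) : firstK k (a ++ firstK k b) = firstK k (a ++ b) := by
  rw [firstK_append, firstKAux_firstK, firstK_append]

lemma firstK_firstK_append (a b : PW M n) : firstK k (firstK k a ++ b) = firstK k (a ++ b) := by
  rw [firstK_append, firstK_firstK, firstK_append]
  congr 1
  exact firstKAux_congr k (fun i => by rw [valueCount_firstK]; omega) b

lemma firstK_append_congr {a a' b b' : PW M n} (ha : firstK k a = firstK k a')
    (hb : firstK k b = firstK k b') : firstK k (a ++ b) = firstK k (a' ++ b') := by
  rw [← firstK_firstK_append, ← firstK_append_firstK, ha, hb, firstK_append_firstK,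
    firstK_firstK_append]

lemma firstK_flatMap_congr {α : Type*} {f g : α → PW M n}
    (h : ∀ x, firstK k (f x) = firstK k (g x)) (l : List α) :
    firstK k (l.flatMap f) = firstK k (l.flatMap g) := by
  induction l with
  | nil => rfl
  | cons x t ih => simpa only [List.flatMap_cons] using firstK_append_congr k (h x) ih

lemma firstK_append_of_le_valueCount {a b : PW M n} (h : ∀ l ∈ b, k ≤ valueCount l.1 a) :
    firstK k (a ++ b) = firstK k a := by
  rw [firstK_append, firstKAux_eq_nil k h, List.append_nil]

lemma firstKAux_map {f : Fin n × M → Fin n × M'} (hf : ∀ x, (f x).1 = x.1) (pre p : PW M n) :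
    firstKAux k (pre.map f) (p.map f) = (firstKAux k pre p).map f := by
  induction p generalizing pre with
  | nil => rfl
  | cons l t ih =>
    have hl := valueCount_map hf l.1 pre
    simp only [List.map_cons, firstKAux_cons, hf, hl]
    split_ifs <;> simp [← ih]

lemma firstK_map {f : Fin n × M → Fin n × M'} (hf : ∀ x, (f x).1 = x.1) (p : PW M n) :
    firstK k (p.map f) = (firstK k p).map f :=
  firstKAux_map k hf [] p

end FirstK

section Superposition

variable {M : Type*} [Monoid M] {n m : ℕ} (k : ℕ)

lemma pwSuper_append (a b : PW M n) (q : Fin n → PW M m) :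
    pwSuper (a ++ b) q = pwSuper a q ++ pwSuper b q :=
  List.flatMap_append

lemma pwSuper_singleton (l : Fin n × M) (q : Fin n → PW M m) :
    pwSuper [l] q = (q l.1).map fun x => (x.1, l.2 * x.2) :=
  List.flatMap_singleton ..

@[simp]
lemma pwSuper_nil (q : Fin n → PW M m) : pwSuper [] q = [] :=
  rfl

lemma valueCount_le_valueCount_pwSuper {q : Fin n → PW M m} {i : Fin n} {w : Fin m}
    (hw : 0 < valueCount w (q i)) (p : PW M n) :
    valueCount i p ≤ valueCount w (pwSuper p q) := by
  induction p using List.reverseRecOn with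
  | nil => simp
  | append_singleton u l ih =>
    simp only [pwSuper_append, valueCount_append, pwSuper_singleton, valueCount_map,
      valueCount_singleton, implies_true]
    split_ifs with hl
    · subst hl; omega
    · omega

lemma firstK_pwSuper_firstK_right (p : PW M n) (q : Fin n → PW M m) :
    firstK k (pwSuper p fun i => firstK k (q i)) = firstK k (pwSuper p q) :=
  firstK_flatMap_congr k (fun l => by simp only [firstK_map, firstK_firstK, implies_true]) p

lemma firstK_pwSuper_firstK_left (p : PW M n) (q : Fin n → PW M m) :
    firstK k (pwSuper (firstK k p) q) = firstK k (pwSuper p q) := by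
  induction p using List.reverseRecOn with
  | nil => rfl
  | append_singleton u l ih =>
    rw [firstK_append_singleton, pwSuper_append, pwSuper_append]
    split_ifs with hl
    · exact firstK_append_congr k ih rfl
    · rw [pwSuper_nil, List.append_nil, ih, eq_comm]
      refine firstK_append_of_le_valueCount k fun x hx => ?_
      rw [pwSuper_singleton] at hx
      obtain ⟨y, hy, rfl⟩ := List.mem_map.1 hx
      exact (not_lt.1 hl).trans (valueCount_le_valueCount_pwSuper (valueCount_pos_of_mem hy) u)

lemma isCloneCong_firstK : IsCloneCong (M := M) fun _ p p' => firstK k p = firstK k p' := by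
  intro n m p p' q q' hp hq
  rw [← firstK_pwSuper_firstK_right, ← firstK_pwSuper_firstK_left,
    ← firstK_pwSuper_firstK_right k p', ← firstK_pwSuper_firstK_left k p', hp, funext hq]

lemma valueCount_zero_chainW (α : Fin (k + 1) → M) : valueCount 0 (chainW M k α) = k := by
  simp [chainW, valueCount, List.countP_flatMap, Function.comp_def]

lemma firstK_chainW' (α : Fin (k + 1) → M) :
    firstK k (chainW' M k α) = firstK k (chainW M k α) := by
  rw [chainW', firstK_append_singleton, valueCount_zero_chainW, if_neg (lt_irrefl k),
    List.append_nil]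

end Superposition

section Minimality

variable {M : Type*} [Monoid M] {n : ℕ}

lemma pwSuper_chainW {k : ℕ} (α : Fin (k + 1) → M) (i : Fin n) (s : Fin k → PW M n) :
    pwSuper (chainW M k α) (Fin.cons [(i, 1)] s) =
      (List.finRange k).flatMap fun j => (i, α j.castSucc) :: s j := by
  simp [chainW, pwSuper, List.flatMap_assoc]

lemma pwSuper_chainW' {k : ℕ} (α : Fin (k + 1) → M) (i : Fin n) (s : Fin k → PW M n) :
    pwSuper (chainW' M k α) (Fin.cons [(i, 1)] s) =
      pwSuper (chainW M k α) (Fin.cons [(i, 1)] s) ++ [(i, α (Fin.last k))] := by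
  simp [chainW', pwSuper_append, pwSuper_singleton]

variable {r : ∀ n, PW M n → PW M n → Prop} (hE : ∀ n, Equivalence (r n)) (hC : IsCloneCong r)
include hE hC

lemma IsCloneCong.append {a a' b b' : PW M n} (ha : r n a a') (hb : r n b b') :
    r n (a ++ b) (a' ++ b') := by
  have hcat : ∀ c d : PW M n, pwSuper [((0 : Fin 2), (1 : M)), (1, 1)] ![c, d] = c ++ d := by
    simp [pwSuper]
  simpa only [hcat] using hC ((hE 2).refl [((0 : Fin 2), (1 : M)), (1, 1)]) (q := ![a, b])
    (q' := ![a', b']) (Fin.forall_fin_two.2 ⟨ha, hb⟩)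

variable {k : ℕ} (hgen : ∀ α : Fin (k + 1) → M, r (k + 1) (chainW' M k α) (chainW M k α))
include hgen

lemma IsCloneCong.append_singleton_of_le_valueCount {u : PW M n} {i : Fin n} (β : M)
    (h : k ≤ valueCount i u) : r n (u ++ [(i, β)]) u := by
  obtain ⟨s₀, βs, s, rfl⟩ := exists_eq_append_flatMap_of_le_valueCount h
  let q : Fin (k + 1) → PW M n := Fin.cons [(i, 1)] s
  have hsub := hC (hgen (Fin.snoc βs β)) fun j => (hE n).refl (q j)
  rw [pwSuper_chainW', pwSuper_chainW] at hsub
  simpa using hC.append hE ((hE n).refl s₀) hsub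

lemma IsCloneCong.rel_firstK (p : PW M n) : r n p (firstK k p) := by
  induction p using List.reverseRecOn with
  | nil => exact (hE n).refl []
  | append_singleton u l ih =>
    rw [firstK_append_singleton]
    split_ifs with hl
    · exact hC.append hE ih ((hE n).refl [l])
    · exact (hE n).trans (hC.append_singleton_of_le_valueCount hE hgen l.2 (not_lt.1 hl))
        (by simpa using ih)

end Minimality

/-- The fiber relation of `firstK k` is the smallest clone congruence of `P(M)`
relating, for all `α_1, …, α_{k+1} ∈ M`, the word
`1^{α_1} 2^e 1^{α_2} 3^e ⋯ 1^{α_k} (k+1)^e 1^{α_{k+1}}` with the word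
`1^{α_1} 2^e 1^{α_2} 3^e ⋯ 1^{α_k} (k+1)^e`. -/
theorem firstK_smallest_cloneCongruence (M : Type*) [Monoid M] (k : ℕ) :
    (∀ n, Equivalence (fun p p' : PW M n => firstK k p = firstK k p')) ∧
    IsCloneCong (fun n (p p' : PW M n) => firstK k p = firstK k p') ∧
    (∀ α : Fin (k + 1) → M, firstK k (chainW' M k α) = firstK k (chainW M k α)) ∧
    (∀ r : ∀ n, PW M n → PW M n → Prop, (∀ n, Equivalence (r n)) → IsCloneCong r →
      (∀ α : Fin (k + 1) → M, r (k + 1) (chainW' M k α) (chainW M k α)) →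
      ∀ (n : ℕ) (p p' : PW M n), firstK k p = firstK k p' → r n p p') := by
  refine ⟨fun n => InvImage.equivalence _ _ eq_equivalence, isCloneCong_firstK k,
    firstK_chainW' k, fun r hE hC hgen n p p' hp => ?_⟩
  have hp' := hC.rel_firstK hE hgen p'
  rw [← hp] at hp'
  exact (hE n).trans (hC.rel_firstK hE hgen p) ((hE n).symm hp')
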